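/- The fractional chromatic number of the Golomb graph equals 10/3. -/

import Mathlib

/-!
Every independent set of the Golomb graph has at most three vertices, so double counting the
cover condition over the ten vertices shows that any fractional coloring has total weight at
least `10 / 3`. Conversely, ten independent triples cover every vertex exactly three times;
weight `1 / 3` on each of them is a fractional coloring of total weight `10 / 3`.
-/

/-- The Golomb graph (10 vertices, 18 edges): central triangle `{0,1,2}`,
intermediate vertices `{3,4,5}` with `3+i` adjacent to the two central
vertices other than `i`, outer triangle `{6,7,8}` with `6+i` adjacent to
`3+i`, and the center `9` adjacent to the three intermediate vertices. -/
def golomb : SimpleGraph (Fin 10) :=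
  SimpleGraph.fromEdgeSet
    {s(0,1), s(0,2), s(1,2),
     s(3,1), s(3,2), s(4,0), s(4,2), s(5,0), s(5,1),
     s(6,7), s(7,8), s(6,8),
     s(6,3), s(7,4), s(8,5),
     s(9,3), s(9,4), s(9,5)}

/-- A fractional coloring of a finite graph `G` assigns nonnegative weights to
(independent) finsets of vertices so that every vertex is covered by total
weight at least 1.  `fracChromNum G` is the infimum of the total weight. -/
noncomputable def fracChromNum {V : Type*} [Fintype V] [DecidableEq V]
    (G : SimpleGraph V) : ℝ :=
  sInf {t : ℝ | ∃ w : Finset V → ℝ,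
    (∀ S, 0 ≤ w S) ∧
    (∀ S, w S ≠ 0 → ∀ u ∈ S, ∀ v ∈ S, ¬ G.Adj u v) ∧
    (∀ v : V, 1 ≤ ∑ S ∈ Finset.univ.filter (fun S => v ∈ S), w S) ∧
    (∑ S : Finset V, w S = t)}

open Finset SimpleGraph

namespace SimpleGraph

variable {V : Type*} {G : SimpleGraph V}

theorem isIndepSet_coe_iff {S : Finset V} :
    G.IsIndepSet (S : Set V) ↔ ∀ u ∈ S, ∀ v ∈ S, ¬ G.Adj u v :=
  ⟨fun h _ hu _ hv huv => h hu hv huv.ne huv, fun h u hu v hv _ => h u hu v hv⟩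

variable [Fintype V] [DecidableEq V]

structure IsFracColoring (G : SimpleGraph V) (w : Finset V → ℝ) : Prop where
  nonneg : ∀ S, 0 ≤ w S
  isIndepSet_of_ne_zero : ∀ S, w S ≠ 0 → G.IsIndepSet (S : Set V)
  one_le_sum_mem : ∀ v, 1 ≤ ∑ S ∈ univ.filter (fun S => v ∈ S), w S

theorem fracChromNum_eq_of_forall_le {t : ℝ} {w₀ : Finset V → ℝ} (hw₀ : G.IsFracColoring w₀)
    (hw₀t : ∑ S, w₀ S = t) (hle : ∀ w, G.IsFracColoring w → t ≤ ∑ S, w S) :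
    fracChromNum G = t := by
  refine IsLeast.csInf_eq ⟨⟨w₀, hw₀.nonneg, ?_, hw₀.one_le_sum_mem, hw₀t⟩, ?_⟩
  · exact fun S hS => isIndepSet_coe_iff.mp (hw₀.isIndepSet_of_ne_zero S hS)
  · rintro _ ⟨w, hnonneg, hindep, hcover, rfl⟩
    exact hle w ⟨hnonneg, fun S hS => isIndepSet_coe_iff.mpr (hindep S hS), hcover⟩

theorem sum_sum_filter_mem_eq_sum_card_mul (f : Finset V → ℝ) :
    ∑ v, ∑ S ∈ univ.filter (fun S => v ∈ S), f S = ∑ S, (#S : ℝ) * f S := by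
  simp_rw [sum_filter]
  rw [sum_comm]
  refine sum_congr rfl fun S _ => ?_
  rw [sum_ite_mem, univ_inter, sum_const, nsmul_eq_mul]

theorem IsFracColoring.card_le_indepNum_mul_sum {w : Finset V → ℝ} (hw : G.IsFracColoring w) :
    (Fintype.card V : ℝ) ≤ G.indepNum * ∑ S, w S :=
  calc (Fintype.card V : ℝ) = ∑ _v : V, (1 : ℝ) := by simp
    _ ≤ ∑ v, ∑ S ∈ univ.filter (fun S => v ∈ S), w S := sum_le_sum fun v _ => hw.one_le_sum_mem v
    _ = ∑ S, (#S : ℝ) * w S := sum_sum_filter_mem_eq_sum_card_mul w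
    _ ≤ ∑ S, (G.indepNum : ℝ) * w S := by
      refine sum_le_sum fun S _ => ?_
      by_cases hS : w S = 0
      · simp [hS]
      · exact mul_le_mul_of_nonneg_right
          (mod_cast (hw.isIndepSet_of_ne_zero S hS).card_le_indepNum) (hw.nonneg S)
    _ = G.indepNum * ∑ S, w S := (mul_sum _ _ _).symm

theorem isFracColoring_of_le_card_filter_mem {F : Finset (Finset V)} {k : ℕ} (hk : 0 < k)
    (hF : ∀ S ∈ F, G.IsIndepSet (S : Set V)) (hcover : ∀ v, k ≤ #(F.filter (fun S => v ∈ S))) :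
    G.IsFracColoring fun S => if S ∈ F then (k : ℝ)⁻¹ else 0 where
  nonneg S := by positivity
  isIndepSet_of_ne_zero S hS := hF S (by by_contra h; exact hS (if_neg h))
  one_le_sum_mem v := by
    rw [sum_ite_mem, filter_inter, univ_inter, sum_const, nsmul_eq_mul]
    rw [← div_eq_mul_inv, one_le_div (by positivity)]
    exact_mod_cast hcover v

end SimpleGraph

instance : DecidableRel golomb.Adj := by
  unfold golomb
  infer_instance

theorem golomb_card_le_three_of_isIndepSet :
    ∀ S : Finset (Fin 10), golomb.IsIndepSet (S : Set (Fin 10)) → #S ≤ 3 := by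
  decide +kernel

theorem golomb_indepNum_le : golomb.indepNum ≤ 3 := by
  obtain ⟨S, hS⟩ := golomb.exists_isNIndepSet_indepNum
  exact hS.card_eq ▸ golomb_card_le_three_of_isIndepSet S hS.isIndepSet

def golombTriples : Finset (Finset (Fin 10)) :=
  {{9,0,6}, {9,1,7}, {9,2,8}, {3,4,5},
   {0,3,7}, {0,3,8}, {1,4,6}, {1,4,8}, {2,5,6}, {2,5,7}}

theorem golombTriples_isIndepSet : ∀ S ∈ golombTriples, golomb.IsIndepSet (S : Set (Fin 10)) := by
  decide +kernel

theorem golombTriples_card_filter_mem : ∀ v, #(golombTriples.filter (fun S => v ∈ S)) = 3 := by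
  decide +kernel

/-- The fractional chromatic number of the Golomb graph equals `10/3`. -/
theorem golomb_fracChromNum : fracChromNum golomb = 10 / 3 := by
  refine fracChromNum_eq_of_forall_le (isFracColoring_of_le_card_filter_mem (k := 3) (by norm_num)
    golombTriples_isIndepSet fun v => (golombTriples_card_filter_mem v).ge) ?_ fun w hw => ?_
  · rw [sum_ite_mem, univ_inter, sum_const, show #golombTriples = 10 by rfl]
    norm_num
  · calc (10 : ℝ) / 3 = Fintype.card (Fin 10) / 3 := by simp
      _ ≤ golomb.indepNum * (∑ S, w S) / 3 := by gcongr; exact hw.card_le_indepNum_mul_sum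
      _ ≤ 3 * (∑ S, w S) / 3 := by
        gcongr
        · exact sum_nonneg fun S _ => hw.nonneg S
        · exact_mod_cast golomb_indepNum_le
      _ = ∑ S, w S := by ring
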